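/- arXiv:2110.10040 — 4 statements merged into one kernel-verified Lean document; each statement's English description precedes it below -/
import Mathlib

section
/- If u : [0,1] → ℝ satisfies the integral identity (W u)(ρ) := (1/2)∫₀¹ exp(-ξ|ρ-ρ'|) u(ρ') dρ' and u is an eigenfunction of W with eigenvalue λ, then u satisfies the ODE λ u'' = ξ(ξλ - 1) u on (0,1). -/
/-!
Split the integral at `ρ`: on `[0, ρ]` the kernel is `exp (-ξ ρ) exp (ξ ρ')`, on `[ρ, 1]` it is
`exp (ξ ρ) exp (-ξ ρ')`. Hence `W u (ρ) = (e^{-ξρ} G(ρ) + e^{ξρ} H(ρ)) / 2` with `G, H` integrals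
of `e^{±ξρ'} u` with variable endpoint. Differentiating twice, the exponential prefactors
reproduce `ξ² W u`, while the variable endpoints contribute `-ξ u`; since `W u = λ u` near `ρ`,
this is `λ u'' = ξ² λ u - ξ u`.
-/

open MeasureTheory Real

/-- `∫ s in a..b, exp (-ξ * |r - s|) * u s` split at `r`, with the kernel factored on each half;
the two agree for `r ∈ [a, b]`. -/
noncomputable def expKernelSplit (ξ a b : ℝ) (u : ℝ → ℝ) (r : ℝ) : ℝ :=
  exp (-ξ * r) * (∫ s in a..r, exp (ξ * s) * u s) + exp (ξ * r) * ∫ s in r..b, exp (-ξ * s) * u s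

noncomputable def expKernelSplitDeriv (ξ a b : ℝ) (u : ℝ → ℝ) (r : ℝ) : ℝ :=
  ξ * (exp (ξ * r) * (∫ s in r..b, exp (-ξ * s) * u s) -
    exp (-ξ * r) * ∫ s in a..r, exp (ξ * s) * u s)

lemma hasDerivAt_exp_const_mul (c r : ℝ) :
    HasDerivAt (fun r => exp (c * r)) (c * exp (c * r)) r := by
  simpa [mul_comm] using ((hasDerivAt_id r).const_mul c).exp

lemma exp_neg_mul_mul_exp_mul (c r : ℝ) : exp (-c * r) * exp (c * r) = 1 := by
  rw [← exp_add, neg_mul, neg_add_cancel, exp_zero]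

section ExpKernel

variable {ξ a b : ℝ} {u : ℝ → ℝ}

lemma integral_exp_neg_mul_abs_sub_mul_eq_expKernelSplit (hu : Continuous u) {r : ℝ}
    (hr : r ∈ Set.Icc a b) :
    ∫ s in a..b, exp (-ξ * |r - s|) * u s = expKernelSplit ξ a b u r := by
  have hcont : Continuous fun s => exp (-ξ * |r - s|) * u s := by fun_prop
  rw [← intervalIntegral.integral_add_adjacent_intervals (b := r) (hcont.intervalIntegrable _ _)
    (hcont.intervalIntegrable _ _), expKernelSplit, ← intervalIntegral.integral_const_mul,
    ← intervalIntegral.integral_const_mul]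
  congr 1
  · refine intervalIntegral.integral_congr fun s hs => ?_
    rw [Set.uIcc_of_le hr.1] at hs
    simp only [abs_of_nonneg (sub_nonneg.2 hs.2), ← mul_assoc, ← exp_add]
    ring_nf
  · refine intervalIntegral.integral_congr fun s hs => ?_
    rw [Set.uIcc_of_le hr.2] at hs
    simp only [abs_sub_comm r s, abs_of_nonneg (sub_nonneg.2 hs.1), ← mul_assoc, ← exp_add]
    ring_nf

lemma hasDerivAt_integral_exp_mul (hu : Continuous u) (c a r : ℝ) :
    HasDerivAt (fun r => ∫ s in a..r, exp (c * s) * u s) (exp (c * r) * u r) r :=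
  (Continuous.integral_hasStrictDerivAt (by fun_prop) a r).hasDerivAt

lemma hasDerivAt_integral_exp_mul_left (hu : Continuous u) (c b r : ℝ) :
    HasDerivAt (fun r => ∫ s in r..b, exp (c * s) * u s) (-(exp (c * r) * u r)) r := by
  simpa only [intervalIntegral.integral_symm b] using (hasDerivAt_integral_exp_mul hu c b r).fun_neg

variable (ξ a b)

lemma hasDerivAt_expKernelSplit (hu : Continuous u) (r : ℝ) :
    HasDerivAt (expKernelSplit ξ a b u) (expKernelSplitDeriv ξ a b u r) r := by
  have hG := hasDerivAt_integral_exp_mul hu ξ a r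
  have hH := hasDerivAt_integral_exp_mul_left hu (-ξ) b r
  refine (((hasDerivAt_exp_const_mul (-ξ) r).mul hG).add
    ((hasDerivAt_exp_const_mul ξ r).mul hH)).congr_deriv ?_
  rw [expKernelSplitDeriv]
  ring

lemma hasDerivAt_expKernelSplitDeriv (hu : Continuous u) (r : ℝ) :
    HasDerivAt (expKernelSplitDeriv ξ a b u)
      (ξ ^ 2 * expKernelSplit ξ a b u r - 2 * ξ * u r) r := by
  have hG := hasDerivAt_integral_exp_mul hu ξ a r
  have hH := hasDerivAt_integral_exp_mul_left hu (-ξ) b r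
  have hE := exp_neg_mul_mul_exp_mul ξ r
  refine ((((hasDerivAt_exp_const_mul ξ r).mul hH).sub
    ((hasDerivAt_exp_const_mul (-ξ) r).mul hG)).const_mul ξ).congr_deriv ?_
  rw [expKernelSplit]
  linear_combination (-2 * ξ * u r) * hE

lemma iteratedDeriv_two_expKernelSplit (hu : Continuous u) (r : ℝ) :
    iteratedDeriv 2 (expKernelSplit ξ a b u) r =
      ξ ^ 2 * expKernelSplit ξ a b u r - 2 * ξ * u r := by
  have hderiv : deriv (expKernelSplit ξ a b u) = expKernelSplitDeriv ξ a b u :=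
    funext fun r => (hasDerivAt_expKernelSplit ξ a b hu r).deriv
  rw [iteratedDeriv_succ, iteratedDeriv_one, hderiv,
    (hasDerivAt_expKernelSplitDeriv ξ a b hu r).deriv]

end ExpKernel

theorem eigenfunction_satisfies_ode_general (ξ lam : ℝ) (u : ℝ → ℝ)
    (hu : ContDiff ℝ 2 u)
    (heig : ∀ ρ ∈ Set.Icc (0 : ℝ) 1,
      (1 / 2) * ∫ ρ' in (0 : ℝ)..1, Real.exp (-ξ * |ρ - ρ'|) * u ρ' = lam * u ρ) :
    ∀ ρ ∈ Set.Ioo (0 : ℝ) 1,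
      lam * iteratedDeriv 2 u ρ = ξ * (ξ * lam - 1) * u ρ := by
  intro ρ hρ
  have hcont : Continuous u := hu.continuous
  have hsplit : ∀ r ∈ Set.Icc (0 : ℝ) 1, (1 / 2) * expKernelSplit ξ 0 1 u r = lam * u r :=
    fun r hr => by
      rw [← heig r hr, integral_exp_neg_mul_abs_sub_mul_eq_expKernelSplit hcont hr]
  have hnear : (fun r => (1 / 2) * expKernelSplit ξ 0 1 u r) =ᶠ[nhds ρ] fun r => lam * u r :=
    Filter.mem_of_superset (isOpen_Ioo.mem_nhds hρ) fun r hr =>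
      hsplit r (Set.Ioo_subset_Icc_self hr)
  have hsecond := (hnear.iteratedDeriv 2).eq_of_nhds
  rw [iteratedDeriv_const_mul_field, iteratedDeriv_const_mul_field,
    iteratedDeriv_two_expKernelSplit ξ 0 1 hcont] at hsecond
  linear_combination -hsecond + ξ ^ 2 * hsplit ρ (Set.Ioo_subset_Icc_self hρ)

theorem eigenfunction_satisfies_ode (ξ lam : ℝ) (hξ : 0 < ξ) (u : ℝ → ℝ)
    (hu : ContDiff ℝ 2 u)
    (heig : ∀ ρ ∈ Set.Icc (0 : ℝ) 1,
      (1 / 2) * ∫ ρ' in (0 : ℝ)..1, Real.exp (-ξ * |ρ - ρ'|) * u ρ' = lam * u ρ) :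
    ∀ ρ ∈ Set.Ioo (0 : ℝ) 1,
      lam * iteratedDeriv 2 u ρ = ξ * (ξ * lam - 1) * u ρ :=
  eigenfunction_satisfies_ode_general ξ lam u hu heig
end

section
/- The integral operator W on L²(0,1) with kernel (1/2)exp(-ξ|ρ-ρ'|), ξ > 0, has trivial kernel: if W u = 0 almost everywhere then u = 0 almost everywhere. -/
/-!
Extend `u` by zero to `v` on `ℝ` and split `2 W v = L + R`, where
`L ρ = ∫_{s ≤ ρ} e^{-ξ(ρ-s)} v s` and `R ρ = ∫_{s > ρ} e^{-ξ(s-ρ)} v s`. The kernel is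
`ξ`-Lipschitz in `ρ`, so one may differentiate under the integral: `(L + R)' = ξ (R - L)`
everywhere. Hence `W v`, which vanishes a.e. on `(0,1)`, is continuous and so vanishes on all of
`(0,1)`; then so does its derivative, giving `L = R = 0` there. Thus `ρ ↦ ∫_{s ≤ ρ} e^{ξ s} v s`
is constant on `(0,1)`, and by the Lebesgue differentiation theorem its a.e. derivative
`e^{ξ ρ} v ρ` vanishes.
-/

open MeasureTheory Real Set Filter Topology

theorem abs_exp_neg_sub_exp_neg_le {a b : ℝ} (ha : 0 ≤ a) (hb : 0 ≤ b) :
    |exp (-a) - exp (-b)| ≤ |a - b| := by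
  wlog hab : a ≤ b generalizing a b
  · rw [abs_sub_comm, abs_sub_comm a]
    exact this hb ha (le_of_not_ge hab)
  have hfactor : exp (-a) - exp (-b) = exp (-a) * (1 - exp (-(b - a))) := by
    rw [mul_sub, ← exp_add]
    ring_nf
  have hgap : 1 - exp (-(b - a)) ≤ b - a := by linarith [add_one_le_exp (-(b - a))]
  have hgap_nonneg : 0 ≤ 1 - exp (-(b - a)) := sub_nonneg.2 (exp_le_one_iff.2 (by linarith))
  have hexp_le : exp (-a) ≤ 1 := exp_le_one_iff.2 (by linarith)
  calc |exp (-a) - exp (-b)| = exp (-a) * (1 - exp (-(b - a))) := by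
        rw [hfactor, abs_of_nonneg (mul_nonneg (exp_pos _).le hgap_nonneg)]
    _ ≤ 1 - exp (-(b - a)) := mul_le_of_le_one_left hgap_nonneg hexp_le
    _ ≤ b - a := hgap
    _ = |a - b| := by rw [abs_sub_comm, abs_of_nonneg (sub_nonneg.2 hab)]

theorem abs_exp_neg_mul_abs_sub_le {ξ : ℝ} (hξ : 0 ≤ ξ) (x y : ℝ) :
    |exp (-ξ * |x|) - exp (-ξ * |y|)| ≤ ξ * |x - y| :=
  calc |exp (-ξ * |x|) - exp (-ξ * |y|)| = |exp (-(ξ * |x|)) - exp (-(ξ * |y|))| := by ring_nf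
    _ ≤ |ξ * (|x| - |y|)| := by
        rw [mul_sub]
        exact abs_exp_neg_sub_exp_neg_le (by positivity) (by positivity)
    _ = ξ * |(|x| - |y|)| := by rw [abs_mul, abs_of_nonneg hξ]
    _ ≤ ξ * |x - y| := mul_le_mul_of_nonneg_left (abs_abs_sub_abs_le_abs_sub x y) hξ

theorem lipschitzWith_exp_neg_mul_abs_sub_mul {ξ : ℝ} (hξ : 0 ≤ ξ) (s c : ℝ) :
    LipschitzWith (Real.nnabs (ξ * |c|)) fun ρ => exp (-ξ * |ρ - s|) * c := by
  refine LipschitzWith.of_dist_le_mul fun x y => ?_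
  rw [Real.coe_nnabs, abs_of_nonneg (mul_nonneg hξ (abs_nonneg c)), dist_eq, dist_eq, ← sub_mul,
    abs_mul]
  calc |exp (-ξ * |x - s|) - exp (-ξ * |y - s|)| * |c| ≤ ξ * |x - s - (y - s)| * |c| :=
        mul_le_mul_of_nonneg_right (abs_exp_neg_mul_abs_sub_le hξ _ _) (abs_nonneg c)
    _ = ξ * |c| * |x - y| := by ring_nf

theorem ae_eq_zero_of_setIntegral_Iic_eq_zero {w : ℝ → ℝ} (hw : ∀ x, IntegrableOn w (Iic x))
    {U : Set ℝ} (hU : IsOpen U) (h : ∀ x ∈ U, ∫ t in Iic x, w t = 0) :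
    ∀ᵐ x ∂volume.restrict U, w x = 0 := by
  have hloc : LocallyIntegrable w := fun x => ⟨Iic (x + 1), Iic_mem_nhds (by linarith), hw _⟩
  rw [ae_restrict_iff' hU.measurableSet]
  filter_upwards [LocallyIntegrable.ae_hasDerivAt_integral hloc] with x hx hxU
  have hconst : (fun y => ∫ t in x..y, w t) =ᶠ[𝓝 x] fun _ => 0 := by
    filter_upwards [hU.mem_nhds hxU] with y hy
    rw [← intervalIntegral.integral_Iic_sub_Iic (hw x) (hw y), h y hy, h x hxU, sub_zero]
  exact (hx x).unique ((hasDerivAt_const x 0).congr_of_eventuallyEq hconst)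

noncomputable def expConv (ξ : ℝ) (v : ℝ → ℝ) (ρ : ℝ) : ℝ :=
  ∫ s, exp (-ξ * |ρ - s|) * v s

noncomputable def expConvLeft (ξ : ℝ) (v : ℝ → ℝ) (ρ : ℝ) : ℝ :=
  ∫ s in Iic ρ, exp (-ξ * (ρ - s)) * v s

noncomputable def expConvRight (ξ : ℝ) (v : ℝ → ℝ) (ρ : ℝ) : ℝ :=
  ∫ s in Ioi ρ, exp (-ξ * (s - ρ)) * v s

section ExpConv

variable {ξ : ℝ} {v : ℝ → ℝ}

theorem expConv_indicator {S : Set ℝ} (hS : MeasurableSet S) (ρ : ℝ) :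
    expConv ξ (S.indicator v) ρ = ∫ s in S, exp (-ξ * |ρ - s|) * v s := by
  rw [expConv, ← integral_indicator hS]
  simp only [indicator_mul_right]

theorem integrable_exp_neg_mul_abs_sub_mul (hξ : 0 ≤ ξ) (hv : Integrable v) (ρ : ℝ) :
    Integrable (fun s => exp (-ξ * |ρ - s|) * v s) :=
  hv.bdd_mul (c := 1) (by fun_prop) (ae_of_all _ fun s => by
    rw [norm_of_nonneg (exp_pos _).le, exp_le_one_iff]
    nlinarith [abs_nonneg (ρ - s)])

theorem integrableOn_Iic_exp_neg_mul_sub_mul (hξ : 0 ≤ ξ) (hv : Integrable v) (ρ : ℝ) :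
    IntegrableOn (fun s => exp (-ξ * (ρ - s)) * v s) (Iic ρ) :=
  (integrable_exp_neg_mul_abs_sub_mul hξ hv ρ).integrableOn.congr_fun
    (fun s hs => by dsimp only; rw [abs_of_nonneg (sub_nonneg.2 hs)]) measurableSet_Iic

theorem integrableOn_Ioi_exp_neg_mul_sub_mul (hξ : 0 ≤ ξ) (hv : Integrable v) (ρ : ℝ) :
    IntegrableOn (fun s => exp (-ξ * (s - ρ)) * v s) (Ioi ρ) :=
  (integrable_exp_neg_mul_abs_sub_mul hξ hv ρ).integrableOn.congr_fun
    (fun s hs => by dsimp only; rw [abs_of_neg (sub_neg.2 hs), neg_sub]) measurableSet_Ioi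

theorem expConv_eq_expConvLeft_add_expConvRight (hξ : 0 ≤ ξ) (hv : Integrable v) (ρ : ℝ) :
    expConv ξ v ρ = expConvLeft ξ v ρ + expConvRight ξ v ρ := by
  have hk := integrable_exp_neg_mul_abs_sub_mul hξ hv ρ
  rw [expConv, ← intervalIntegral.integral_Iic_add_Ioi hk.integrableOn hk.integrableOn]
  congr 1
  · refine setIntegral_congr_fun measurableSet_Iic fun s hs => ?_
    rw [abs_of_nonneg (sub_nonneg.2 hs)]
  · refine setIntegral_congr_fun measurableSet_Ioi fun s hs => ?_
    rw [abs_of_neg (sub_neg.2 hs), neg_sub]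

theorem hasDerivAt_expConv (hξ : 0 ≤ ξ) (hv : Integrable v) (ρ : ℝ) :
    HasDerivAt (expConv ξ v) (ξ * (expConvRight ξ v ρ - expConvLeft ξ v ρ)) ρ := by
  set gL := fun s => exp (-ξ * (ρ - s)) * v s
  set gR := fun s => exp (-ξ * (s - ρ)) * v s
  have hL := (integrableOn_Iic_exp_neg_mul_sub_mul hξ hv ρ).integrable_indicator measurableSet_Iic
  have hR := (integrableOn_Ioi_exp_neg_mul_sub_mul hξ hv ρ).integrable_indicator measurableSet_Ioi
  have hdiff : ∀ᵐ s, HasDerivAt (fun ρ' => exp (-ξ * |ρ' - s|) * v s)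
      (ξ * ((Ioi ρ).indicator gR s - (Iic ρ).indicator gL s)) ρ := by
    filter_upwards [volume.ae_ne ρ] with s hs
    have habs := ((((hasDerivAt_abs (sub_ne_zero.2 hs.symm)).comp ρ
      ((hasDerivAt_id ρ).sub_const s)).const_mul (-ξ)).exp).mul_const (v s)
    refine habs.congr_deriv ?_
    rcases hs.lt_or_gt with h | h
    · have hpos : 0 < ρ - s := sub_pos.2 h
      rw [indicator_of_notMem (notMem_Ioi.2 h.le), indicator_of_mem (mem_Iic.2 h.le)]
      simp only [gL, Function.comp_apply, id_eq, abs_of_pos hpos, sign_pos hpos, SignType.coe_one]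
      ring
    · have hneg : ρ - s < 0 := sub_neg.2 h
      rw [indicator_of_mem (mem_Ioi.2 h), indicator_of_notMem (notMem_Iic.2 h)]
      simp only [gR, Function.comp_apply, id_eq, abs_of_neg hneg, neg_sub, sign_neg hneg,
        SignType.coe_neg, SignType.coe_one]
      ring
  obtain ⟨-, hderiv⟩ := hasDerivAt_integral_of_dominated_loc_of_lip (μ := volume)
    (F := fun ρ s => exp (-ξ * |ρ - s|) * v s) (bound := fun s => ξ * |v s|)
    (F' := fun s => ξ * ((Ioi ρ).indicator gR s - (Iic ρ).indicator gL s)) univ_mem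
    (Eventually.of_forall fun ρ' => (integrable_exp_neg_mul_abs_sub_mul hξ hv ρ').1)
    (integrable_exp_neg_mul_abs_sub_mul hξ hv ρ) ((hR.sub hL).const_mul ξ).1
    (ae_of_all _ fun s => (lipschitzWith_exp_neg_mul_abs_sub_mul hξ s (v s)).lipschitzOnWith)
    (hv.abs.const_mul ξ) hdiff
  rwa [integral_const_mul, integral_sub hR hL, integral_indicator measurableSet_Ioi,
    integral_indicator measurableSet_Iic] at hderiv

theorem continuous_expConv (hξ : 0 ≤ ξ) (hv : Integrable v) : Continuous (expConv ξ v) :=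
  continuous_iff_continuousAt.2 fun ρ => (hasDerivAt_expConv hξ hv ρ).continuousAt

theorem expConvLeft_eqOn_zero (hξ : 0 < ξ) (hv : Integrable v) {U : Set ℝ} (hU : IsOpen U)
    (h : EqOn (expConv ξ v) 0 U) : EqOn (expConvLeft ξ v) 0 U := by
  intro ρ hρ
  have hderiv : ξ * (expConvRight ξ v ρ - expConvLeft ξ v ρ) = 0 :=
    (hasDerivAt_expConv hξ.le hv ρ).unique
      ((hasDerivAt_const ρ 0).congr_of_eventuallyEq (h.eventuallyEq_of_mem (hU.mem_nhds hρ)))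
  have hsum : expConvLeft ξ v ρ + expConvRight ξ v ρ = 0 := by
    rw [← expConv_eq_expConvLeft_add_expConvRight hξ.le hv, h hρ, Pi.zero_apply]
  have hdiff := (mul_eq_zero.1 hderiv).resolve_left hξ.ne'
  rw [Pi.zero_apply]
  linarith

theorem ae_eq_zero_of_expConvLeft_eqOn_zero (hξ : 0 ≤ ξ) (hv : Integrable v) {U : Set ℝ}
    (hU : IsOpen U) (h : EqOn (expConvLeft ξ v) 0 U) : ∀ᵐ s ∂volume.restrict U, v s = 0 := by
  have hfactor : ∀ ρ s, exp (-ξ * (ρ - s)) * v s = exp (-ξ * ρ) * (exp (ξ * s) * v s) := by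
    intro ρ s
    rw [← mul_assoc, ← exp_add]
    ring_nf
  have hint : ∀ ρ, IntegrableOn (fun s => exp (ξ * s) * v s) (Iic ρ) := fun ρ =>
    IntegrableOn.congr_fun
      ((integrableOn_Iic_exp_neg_mul_sub_mul hξ hv ρ).const_mul (exp (ξ * ρ))) (fun s _ => by
        rw [hfactor, ← mul_assoc, ← exp_add, show ξ * ρ + -ξ * ρ = 0 by ring, exp_zero, one_mul])
      measurableSet_Iic
  have hzero := ae_eq_zero_of_setIntegral_Iic_eq_zero hint hU fun ρ hρ => by
    have hρ' := h hρ
    simp_rw [Pi.zero_apply, expConvLeft, hfactor, integral_const_mul] at hρ'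
    exact (mul_eq_zero.1 hρ').resolve_left (exp_ne_zero _)
  filter_upwards [hzero] with s hs
  exact (mul_eq_zero.1 hs).resolve_left (exp_ne_zero _)

theorem ae_eq_zero_of_expConv_eqOn_zero (hξ : 0 < ξ) (hv : Integrable v) {U : Set ℝ}
    (hU : IsOpen U) (h : EqOn (expConv ξ v) 0 U) : ∀ᵐ s ∂volume.restrict U, v s = 0 :=
  ae_eq_zero_of_expConvLeft_eqOn_zero hξ.le hv hU (expConvLeft_eqOn_zero hξ hv hU h)

end ExpConv

theorem integral_operator_trivial_kernel (ξ : ℝ) (hξ : 0 < ξ) (u : ℝ → ℝ)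
    (hu : MemLp u 2 (volume.restrict (Set.Ioo (0 : ℝ) 1)))
    (hW : ∀ᵐ ρ ∂(volume.restrict (Set.Ioo (0 : ℝ) 1)),
      ∫ ρ' in Set.Ioo (0 : ℝ) 1, (1 / 2) * Real.exp (-ξ * |ρ - ρ'|) * u ρ' = 0) :
    ∀ᵐ ρ ∂(volume.restrict (Set.Ioo (0 : ℝ) 1)), u ρ = 0 := by
  set v := (Ioo (0 : ℝ) 1).indicator u
  have hv : Integrable v :=
    (integrable_indicator_iff measurableSet_Ioo).2 (hu.integrable one_le_two)
  have hconv_ae : ∀ᵐ ρ ∂volume.restrict (Ioo 0 1), expConv ξ v ρ = 0 := by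
    filter_upwards [hW] with ρ hρ
    simp_rw [mul_assoc, integral_const_mul] at hρ
    rw [expConv_indicator measurableSet_Ioo]
    exact (mul_eq_zero.1 hρ).resolve_left (by norm_num)
  have hconv : EqOn (expConv ξ v) 0 (Ioo 0 1) :=
    Measure.eqOn_open_of_ae_eq hconv_ae isOpen_Ioo (continuous_expConv hξ.le hv).continuousOn
      continuousOn_const
  filter_upwards [ae_eq_zero_of_expConv_eqOn_zero hξ hv isOpen_Ioo hconv,
    ae_restrict_mem measurableSet_Ioo] with ρ hρ hmem
  rwa [← indicator_of_mem hmem u]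
end

section
/- For every x > 0 satisfying tan x = 2ξx/(x² - ξ²) (with x ≠ ξ and cos x ≠ 0), the function u(ρ) = ξ sin(xρ) + x cos(xρ) is an eigenfunction of the operator (W u)(ρ) = (1/2)∫₀¹ exp(-ξ|ρ-ρ'|) u(ρ') dρ' with eigenvalue λ = ξ/(ξ² + x²). -/
/-!
Split the integral at `ρ`. On `[0, ρ]` the integrand is the derivative of
`t ↦ exp (ξ (t - ρ)) sin (x t)`, contributing `sin (x ρ)`. On `[ρ, 1]` it is, up to the factor
`ξ² + x²`, the derivative of `t ↦ exp (-ξ (t - ρ)) ((x² - ξ²) sin (x t) - 2 ξ x cos (x t))`, whose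
value at `t = 1` vanishes exactly by the condition on `tan x`. The two contributions add up to
`2 ξ / (ξ² + x²)` times `u ρ`.
-/

open Real

theorem hasDerivAt_exp_mul_sin_add_cos (a c x A B t : ℝ) :
    HasDerivAt (fun t => exp (a * t + c) * (A * sin (x * t) + B * cos (x * t)))
      (exp (a * t + c) * ((a * A - x * B) * sin (x * t) + (a * B + x * A) * cos (x * t))) t := by
  have hexp := (((hasDerivAt_id t).const_mul a).add_const c).exp
  have hsin := ((hasDerivAt_id t).const_mul x).sin
  have hcos := ((hasDerivAt_id t).const_mul x).cos
  refine (hexp.mul ((hsin.const_mul A).add (hcos.const_mul B))).congr_deriv ?_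
  simp only [id, mul_one, Pi.add_apply]
  ring

theorem integral_exp_mul_sin_add_cos (a c x A B l r : ℝ) :
    ∫ t in l..r, exp (a * t + c) * ((a * A - x * B) * sin (x * t) + (a * B + x * A) * cos (x * t))
      = exp (a * r + c) * (A * sin (x * r) + B * cos (x * r))
        - exp (a * l + c) * (A * sin (x * l) + B * cos (x * l)) :=
  intervalIntegral.integral_eq_sub_of_hasDerivAt
    (fun t _ => hasDerivAt_exp_mul_sin_add_cos a c x A B t)
    (Continuous.intervalIntegrable (by fun_prop) l r)

theorem integral_exp_neg_abs_sub_mul_below (ξ x : ℝ) {ρ : ℝ} (hρ : 0 ≤ ρ) :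
    ∫ t in (0 : ℝ)..ρ, exp (-ξ * |ρ - t|) * (ξ * sin (x * t) + x * cos (x * t)) = sin (x * ρ) := by
  have h := integral_exp_mul_sin_add_cos ξ (-(ξ * ρ)) x 1 0 0 ρ
  simp only [mul_zero, sub_zero, mul_one, zero_add, add_zero, zero_mul, sin_zero,
    add_neg_cancel, exp_zero, one_mul] at h
  rw [← h]
  refine intervalIntegral.integral_congr fun t ht => ?_
  rw [Set.uIcc_of_le hρ] at ht
  simp only [abs_of_nonneg (sub_nonneg.2 ht.2)]
  ring_nf

theorem integral_exp_neg_abs_sub_mul_above (ξ x : ℝ) {ρ : ℝ} (hρ : ρ ≤ 1) :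
    (ξ ^ 2 + x ^ 2) *
        ∫ t in ρ..1, exp (-ξ * |ρ - t|) * (ξ * sin (x * t) + x * cos (x * t))
      = exp (ξ * (ρ - 1)) * ((x ^ 2 - ξ ^ 2) * sin x - 2 * ξ * x * cos x)
        - ((x ^ 2 - ξ ^ 2) * sin (x * ρ) - 2 * ξ * x * cos (x * ρ)) := by
  have h := integral_exp_mul_sin_add_cos (-ξ) (ξ * ρ) x (x ^ 2 - ξ ^ 2) (-(2 * ξ * x)) ρ 1
  rw [show -ξ * ρ + ξ * ρ = 0 by ring, show -ξ * 1 + ξ * ρ = ξ * (ρ - 1) by ring, exp_zero,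
    one_mul, mul_one] at h
  rw [← intervalIntegral.integral_const_mul]
  convert h using 1
  · refine intervalIntegral.integral_congr fun t ht => ?_
    rw [Set.uIcc_of_le hρ] at ht
    simp only [abs_sub_comm ρ t, abs_of_nonneg (sub_nonneg.2 ht.1)]
    ring_nf
  · ring_nf

theorem sub_sq_mul_sin_eq_of_tan_eq {ξ x : ℝ} (hξ : 0 < ξ) (hx : 0 < x) (hxξ : x ≠ ξ)
    (hcos : cos x ≠ 0) (htan : tan x = 2 * ξ * x / (x ^ 2 - ξ ^ 2)) :
    (x ^ 2 - ξ ^ 2) * sin x = 2 * ξ * x * cos x := by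
  have hden : x ^ 2 - ξ ^ 2 ≠ 0 := by
    rw [sq_sub_sq]
    exact mul_ne_zero (by positivity) (sub_ne_zero.2 hxξ)
  rw [tan_eq_sin_div_cos, div_eq_div_iff hcos hden] at htan
  linarith

theorem eigenfunction_of_exp_kernel (ξ x : ℝ) (hξ : 0 < ξ) (hx : 0 < x)
    (hxξ : x ≠ ξ) (hcos : Real.cos x ≠ 0)
    (htan : Real.tan x = 2 * ξ * x / (x ^ 2 - ξ ^ 2))
    (u : ℝ → ℝ) (hu : ∀ ρ, u ρ = ξ * Real.sin (x * ρ) + x * Real.cos (x * ρ)) :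
    ∀ ρ ∈ Set.Icc (0 : ℝ) 1,
      (1 / 2) * ∫ ρ' in (0 : ℝ)..1, Real.exp (-ξ * |ρ - ρ'|) * u ρ'
        = (ξ / (ξ ^ 2 + x ^ 2)) * u ρ := by
  rintro ρ ⟨hρ0, hρ1⟩
  have hchar := sub_sq_mul_sin_eq_of_tan_eq hξ hx hxξ hcos htan
  have hleft := integral_exp_neg_abs_sub_mul_below ξ x hρ0
  have hright := integral_exp_neg_abs_sub_mul_above ξ x hρ1
  rw [hchar, sub_self, mul_zero, zero_sub] at hright
  simp only [hu]
  rw [← intervalIntegral.integral_add_adjacent_intervals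
    (Continuous.intervalIntegrable (by fun_prop) 0 ρ)
    (Continuous.intervalIntegrable (by fun_prop) ρ 1), hleft,
    eq_div_of_mul_eq (by positivity) ((mul_comm _ _).trans hright)]
  field_simp
  ring
end

section
/- Every eigenvalue λ ≠ 0 of the integral operator with kernel (1/2)exp(-ξ|ρ-ρ'|) on L²(0,1) satisfies 0 < λ < 1/ξ. -/
/-! The kernel is the covariance of a stationary Ornstein–Uhlenbeck process:
`(1/2) e^{-ξ|x-y|} = ∫ f(x,t) f(y,t) dt` with `f(x,t) = 1_{t ≤ x} √ξ e^{ξ(t-x)}`, hence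
`⟪u, W u⟫ = ∫ (∫ f(x,t) u(x) dx)² dt ≥ 0`, and `⟪u, W u⟫ = λ ‖u‖²` forces `λ > 0`.
For the upper bound, the Schur test (`2 u(x) u(y) ≤ u(x)² + u(y)²` against the symmetric kernel)
gives `⟪u, W u⟫ ≤ sup_x (∫₀¹ k(x,y) dy) ‖u‖²`, and every row integral is at most
`(1 - e^{-ξ})/ξ < 1/ξ`. -/

open MeasureTheory Real Set Function

section Kernels

variable {X T : Type*} [MeasurableSpace X] [MeasurableSpace T] {μ : Measure X} {ν : Measure T}

theorem integral_sq_pos_of_not_ae_eq_zero {u : X → ℝ} (hu : Integrable (fun x => u x ^ 2) μ)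
    (hu0 : ¬ ∀ᵐ x ∂μ, u x = 0) : 0 < ∫ x, u x ^ 2 ∂μ := by
  refine (integral_nonneg fun x => sq_nonneg (u x)).lt_of_ne' fun h => hu0 ?_
  filter_upwards [(integral_eq_zero_iff_of_nonneg (fun x => sq_nonneg (u x)) hu).1 h] with x hx
  exact pow_eq_zero_iff two_ne_zero |>.1 hx

theorem integral_mul_integral_gram_eq [SFinite μ] [SFinite ν] {f : X → T → ℝ}
    (hf : Measurable (uncurry f)) {h : T → ℝ} (hh : Integrable h ν)
    (hfh : ∀ᵐ x ∂μ, ∀ t, f x t ^ 2 ≤ h t) {w : X → ℝ} (hw : Integrable w μ) :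
    ∫ x, w x * ∫ y, (∫ t, f x t * f y t ∂ν) * w y ∂μ ∂μ
      = ∫ t, (∫ x, f x t * w x ∂μ) ^ 2 ∂ν := by
  set F : T → ℝ := fun t => ∫ x, f x t * w x ∂μ
  have hff : ∀ᵐ x ∂μ, ∀ᵐ y ∂μ, ∀ t, |f x t * f y t| ≤ h t := by
    filter_upwards [hfh] with x hx
    filter_upwards [hfh] with y hy t
    rw [abs_mul]
    nlinarith [hx t, hy t, sq_nonneg (|f x t| - |f y t|), sq_abs (f x t), sq_abs (f y t)]
  have hfx (x : X) : Measurable (f x) := hf.comp measurable_prodMk_left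
  have hF_meas : AEStronglyMeasurable F ν :=
    ((hf.comp measurable_swap).aestronglyMeasurable.mul hw.1.comp_snd).integral_prod_right'
  have inner : ∀ᵐ x ∂μ, ∫ y, (∫ t, f x t * f y t ∂ν) * w y ∂μ = ∫ t, f x t * F t ∂ν := by
    filter_upwards [hff] with x hx
    have hint : Integrable (uncurry fun y t => f x t * f y t * w y) (μ.prod ν) := by
      refine (hw.norm.mul_prod hh).mono' ?_ ?_
      · exact (((hfx x).comp measurable_snd).mul hf).aestronglyMeasurable.mul hw.1.comp_fst
      · filter_upwards [Measure.quasiMeasurePreserving_fst.ae hx] with p hp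
        rw [uncurry_apply_pair, norm_mul, Real.norm_eq_abs, Real.norm_eq_abs, mul_comm]
        exact mul_le_mul_of_nonneg_left (hp p.2) (abs_nonneg _)
    simp_rw [← integral_mul_const]
    rw [integral_integral_swap hint]
    simp_rw [F, ← integral_const_mul, mul_assoc]
  have hfF : ∀ᵐ x ∂μ, ∀ t, |f x t * F t| ≤ h t * ∫ y, |w y| ∂μ := by
    filter_upwards [hff] with x hx t
    rw [← integral_const_mul, ← integral_const_mul, ← Real.norm_eq_abs]
    refine norm_integral_le_of_norm_le (hw.norm.const_mul _) ?_
    filter_upwards [hx] with y hy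
    rw [← mul_assoc, norm_mul, Real.norm_eq_abs, Real.norm_eq_abs]
    exact mul_le_mul_of_nonneg_right (hy t) (abs_nonneg _)
  have outer : Integrable (uncurry fun x t => w x * (f x t * F t)) (μ.prod ν) := by
    refine (hw.norm.mul_prod (hh.mul_const (∫ y, |w y| ∂μ))).mono' ?_ ?_
    · exact hw.1.comp_fst.mul (hf.aestronglyMeasurable.mul hF_meas.comp_snd)
    · filter_upwards [Measure.quasiMeasurePreserving_fst.ae hfF] with p hp
      rw [uncurry_apply_pair, norm_mul, Real.norm_eq_abs, Real.norm_eq_abs]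
      exact mul_le_mul_of_nonneg_left (hp p.2) (abs_nonneg _)
  calc ∫ x, w x * ∫ y, (∫ t, f x t * f y t ∂ν) * w y ∂μ ∂μ
      = ∫ x, ∫ t, w x * (f x t * F t) ∂ν ∂μ := by
        refine integral_congr_ae ?_
        filter_upwards [inner] with x hx
        rw [hx, integral_const_mul]
    _ = ∫ t, F t ^ 2 ∂ν := by
        rw [integral_integral_swap outer]
        congr with t
        simp_rw [F, sq, ← integral_mul_const]
        congr with x; ring

theorem integral_mul_integral_le_of_symm [IsFiniteMeasure μ] {k : X → X → ℝ}
    (hk : Measurable (uncurry k)) (hk0 : ∀ x y, 0 ≤ k x y) (hsymm : ∀ x y, k x y = k y x)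
    {C : ℝ} (hC : ∀ x y, k x y ≤ C) {M : ℝ} (hM : ∀ᵐ x ∂μ, ∫ y, k x y ∂μ ≤ M)
    {u : X → ℝ} (hu : MemLp u 2 μ) :
    ∫ x, u x * ∫ y, k x y * u y ∂μ ∂μ ≤ M * ∫ x, u x ^ 2 ∂μ := by
  have hu1 : Integrable u μ := hu.integrable one_le_two
  have hu2 : Integrable (fun x => u x ^ 2) μ := hu.integrable_sq
  have hk_norm (p : X × X) : ‖k p.1 p.2‖ ≤ C := by
    rw [Real.norm_eq_abs, abs_of_nonneg (hk0 p.1 p.2)]; exact hC p.1 p.2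
  have hI : Integrable (fun p : X × X => k p.1 p.2 * (u p.1 * u p.2)) (μ.prod μ) := by
    refine ((hu1.norm.mul_prod hu1.norm).const_mul C).mono'
      (hk.aestronglyMeasurable.mul (hu1.1.comp_fst.mul hu1.1.comp_snd)) (ae_of_all _ fun p => ?_)
    rw [norm_mul, norm_mul]
    exact mul_le_mul_of_nonneg_right (hk_norm p)
      (mul_nonneg (norm_nonneg (u p.1)) (norm_nonneg (u p.2)))
  have hJ : Integrable (fun p : X × X => k p.1 p.2 * u p.1 ^ 2) (μ.prod μ) := by
    refine ((hu2.mul_prod (integrable_const (1 : ℝ))).const_mul C).mono'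
      (hk.aestronglyMeasurable.mul hu2.1.comp_fst) (ae_of_all _ fun p => ?_)
    rw [norm_mul, mul_one, Real.norm_of_nonneg (sq_nonneg (u p.1))]
    exact mul_le_mul_of_nonneg_right (hk_norm p) (sq_nonneg (u p.1))
  have hJ' : Integrable (fun p : X × X => k p.2 p.1 * u p.2 ^ 2) (μ.prod μ) := hJ.swap
  calc ∫ x, u x * ∫ y, k x y * u y ∂μ ∂μ = ∫ p, k p.1 p.2 * (u p.1 * u p.2) ∂μ.prod μ := by
        rw [integral_prod _ hI]
        congr with x
        rw [← integral_const_mul]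
        congr with y
        ring
    _ ≤ ∫ p, (k p.1 p.2 * u p.1 ^ 2 + k p.2 p.1 * u p.2 ^ 2) / 2 ∂μ.prod μ := by
        refine integral_mono hI ((hJ.add hJ').div_const 2) fun p => ?_
        rw [hsymm p.2 p.1]
        nlinarith [mul_nonneg (hk0 p.1 p.2) (sq_nonneg (u p.1 - u p.2))]
    _ = ∫ p, k p.1 p.2 * u p.1 ^ 2 ∂μ.prod μ := by
        rw [integral_div, integral_add hJ hJ',
          ← integral_prod_swap fun p : X × X => k p.1 p.2 * u p.1 ^ 2]
        simp only [Prod.fst_swap, Prod.snd_swap]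
        ring
    _ = ∫ x, ∫ y, k x y * u x ^ 2 ∂μ ∂μ := integral_prod _ hJ
    _ ≤ ∫ x, u x ^ 2 * M ∂μ := by
        refine integral_mono_ae hJ.integral_prod_left (hu2.mul_const M) ?_
        filter_upwards [hM] with x hx
        rw [integral_mul_const, mul_comm]
        exact mul_le_mul_of_nonneg_left hx (sq_nonneg _)
    _ = M * ∫ x, u x ^ 2 ∂μ := by rw [integral_mul_const, mul_comm]

end Kernels

noncomputable def expFeature (ξ x t : ℝ) : ℝ := if t ≤ x then √ξ * exp (ξ * (t - x)) else 0

theorem measurable_expFeature (ξ : ℝ) : Measurable (uncurry (expFeature ξ)) :=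
  Measurable.ite (measurableSet_le measurable_snd measurable_fst) (by fun_prop) measurable_const

theorem integral_expFeature_mul {ξ : ℝ} (hξ : 0 < ξ) (x y : ℝ) :
    ∫ t, expFeature ξ x t * expFeature ξ y t = 1 / 2 * exp (-ξ * |x - y|) := by
  have hprod (t : ℝ) : expFeature ξ x t * expFeature ξ y t
      = (Iic (min x y)).indicator (fun t => ξ * exp (-ξ * (x + y)) * exp (2 * ξ * t)) t := by
    simp only [expFeature, indicator, mem_Iic, le_min_iff]
    split_ifs <;> first | tauto | simp_all
    rw [mul_mul_mul_comm, Real.mul_self_sqrt hξ.le, ← exp_add, mul_assoc, ← exp_add]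
    ring_nf
  have habs : -ξ * |x - y| = -ξ * (x + y) + 2 * ξ * min x y := by
    rcases le_total x y with h | h
    · rw [abs_of_nonpos (by linarith), min_eq_left h]; ring
    · rw [abs_of_nonneg (by linarith), min_eq_right h]; ring
  rw [funext hprod, integral_indicator measurableSet_Iic, integral_const_mul,
    integral_exp_mul_Iic (by positivity), habs, exp_add]
  field_simp

theorem expFeature_sq_le {ξ x : ℝ} (hξ : 0 ≤ ξ) (hx : x ∈ Icc 0 1) (t : ℝ) :
    expFeature ξ x t ^ 2 ≤ (Iic 1).indicator (fun t => ξ * exp (2 * ξ * t)) t := by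
  unfold expFeature
  split_ifs with ht
  · rw [indicator_of_mem (show t ∈ Iic 1 from ht.trans hx.2), mul_pow, sq_sqrt hξ, ← exp_nat_mul,
      Nat.cast_ofNat]
    exact mul_le_mul_of_nonneg_left (exp_le_exp.2 (by nlinarith [mul_nonneg hξ hx.1])) hξ
  · rw [sq, mul_zero]
    exact indicator_nonneg (fun t _ => by positivity) t

theorem integral_exp_mul_add {a b c d : ℝ} (hc : c ≠ 0) :
    ∫ t in a..b, exp (c * t + d) = (exp (c * b + d) - exp (c * a + d)) / c := by
  rw [intervalIntegral.integral_comp_mul_add exp hc, integral_exp, smul_eq_mul, div_eq_inv_mul]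

theorem integral_Ioo_exp_abs_sub_le {ξ x : ℝ} (hξ : 0 < ξ) (hx : x ∈ Icc 0 1) :
    ∫ y in Ioo 0 1, 1 / 2 * exp (-ξ * |x - y|) ≤ (1 - exp (-ξ)) / ξ := by
  have hcont : Continuous fun y => 1 / 2 * exp (-ξ * |x - y|) := by fun_prop
  have hleft : ∫ y in 0..x, 1 / 2 * exp (-ξ * |x - y|) = (1 - exp (-ξ * x)) / (2 * ξ) := by
    rw [intervalIntegral.integral_congr (g := fun y => 1 / 2 * exp (ξ * y + -ξ * x)) fun y hy => by
      rw [uIcc_of_le hx.1] at hy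
      simp only [abs_of_nonneg (sub_nonneg.2 hy.2)]; ring_nf]
    rw [intervalIntegral.integral_const_mul, integral_exp_mul_add hξ.ne',
      show ξ * x + -ξ * x = 0 by ring, exp_zero, show ξ * 0 + -ξ * x = -ξ * x by ring]
    field_simp
  have hright : ∫ y in x..1, 1 / 2 * exp (-ξ * |x - y|) = (1 - exp (-ξ * (1 - x))) / (2 * ξ) := by
    rw [intervalIntegral.integral_congr (g := fun y => 1 / 2 * exp (-ξ * y + ξ * x)) fun y hy => by
      rw [uIcc_of_le hx.2] at hy
      simp only [abs_of_nonpos (sub_nonpos.2 hy.1)]; ring_nf]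
    rw [intervalIntegral.integral_const_mul, integral_exp_mul_add (neg_ne_zero.2 hξ.ne'),
      show -ξ * x + ξ * x = 0 by ring, exp_zero, show -ξ * 1 + ξ * x = -ξ * (1 - x) by ring]
    field_simp
    ring
  have hx1 : exp (-ξ) ≤ exp (-ξ * x) := exp_le_exp.2 (by nlinarith [hx.2])
  have hx2 : exp (-ξ) ≤ exp (-ξ * (1 - x)) := exp_le_exp.2 (by nlinarith [hx.1])
  rw [← integral_Ioc_eq_integral_Ioo, ← intervalIntegral.integral_of_le zero_le_one,
    ← intervalIntegral.integral_add_adjacent_intervals (hcont.intervalIntegrable 0 x)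
      (hcont.intervalIntegrable x 1), hleft, hright]
  rw [← add_div, div_le_div_iff₀ (by positivity) hξ]
  nlinarith

theorem eigenvalue_bounds (ξ lam : ℝ) (hξ : 0 < ξ) (u : ℝ → ℝ)
    (hu : MemLp u 2 (volume.restrict (Set.Ioo (0 : ℝ) 1)))
    (hu0 : ¬ (∀ᵐ ρ ∂(volume.restrict (Set.Ioo (0 : ℝ) 1)), u ρ = 0))
    (hlam : lam ≠ 0)
    (heig : ∀ᵐ ρ ∂(volume.restrict (Set.Ioo (0 : ℝ) 1)),
      ∫ ρ' in Set.Ioo (0 : ℝ) 1, (1 / 2) * Real.exp (-ξ * |ρ - ρ'|) * u ρ'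
        = lam * u ρ) :
    0 < lam ∧ lam < 1 / ξ := by
  have hIcc : ∀ᵐ x ∂(volume.restrict (Ioo (0 : ℝ) 1)), x ∈ Icc (0 : ℝ) 1 := by
    filter_upwards [ae_restrict_mem measurableSet_Ioo] with x hx using Ioo_subset_Icc_self hx
  have hN := integral_sq_pos_of_not_ae_eq_zero hu.integrable_sq hu0
  have hQ : ∫ x in Ioo 0 1, u x * ∫ y in Ioo 0 1, 1 / 2 * exp (-ξ * |x - y|) * u y
      = lam * ∫ x in Ioo 0 1, u x ^ 2 := by
    rw [← integral_const_mul]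
    refine integral_congr_ae ?_
    filter_upwards [heig] with x hx
    rw [hx]; ring
  have hpos : 0 ≤ ∫ x in Ioo 0 1, u x * ∫ y in Ioo 0 1, 1 / 2 * exp (-ξ * |x - y|) * u y := by
    simp_rw [← integral_expFeature_mul hξ]
    rw [integral_mul_integral_gram_eq (measurable_expFeature ξ)
      (IntegrableOn.integrable_indicator ((integrableOn_exp_mul_Iic (by positivity) 1).const_mul ξ)
        measurableSet_Iic) (hIcc.mono fun x hx => expFeature_sq_le hξ.le hx)
      (hu.integrable one_le_two)]
    exact integral_nonneg fun t => sq_nonneg _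
  have hle := integral_mul_integral_le_of_symm (k := fun x y => 1 / 2 * exp (-ξ * |x - y|))
    (by fun_prop) (fun x y => by positivity) (fun x y => by rw [abs_sub_comm])
    (fun x y => mul_le_of_le_one_right one_half_pos.le
      (exp_le_one_iff.2 (mul_nonpos_of_nonpos_of_nonneg (neg_nonpos.2 hξ.le) (abs_nonneg _))))
    (hIcc.mono fun x hx => integral_Ioo_exp_abs_sub_le hξ hx) hu
  have hM : (1 - exp (-ξ)) / ξ < 1 / ξ := by gcongr; linarith [exp_pos (-ξ)]
  rw [hQ] at hpos hle
  exact ⟨(nonneg_of_mul_nonneg_left hpos hN).lt_of_ne' hlam,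
    lt_of_mul_lt_mul_right (hle.trans_lt (mul_lt_mul_of_pos_right hM hN)) hN.le⟩
end
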